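/- arXiv:2504.19092 — 2 statements merged into one kernel-verified Lean document; each statement's English description precedes it below -/
import Mathlib

section
/- Let (M,g) be a Riemannian manifold and E an involutive distribution, and ∇ the Levi-Civita connection of (M,g) with respect to E. Then for all sections X, Y of E and ξ of E^⊥, g(∇_X Y, ξ) = 0; equivalently, g(Y, ∇_X ξ) = 0. In other words, E is totally geodesic (parallel along itself) with respect to ∇. -/
open scoped Manifold Derivation

local notation "∞" => (⊤ : ℕ∞)

noncomputable section

variable {EM : Type*} [NormedAddCommGroup EM] [NormedSpace ℝ EM]
  {H : Type*} [TopologicalSpace H]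

/-- Smooth vector fields on `M`, realized as derivations of the algebra of smooth functions. -/
abbrev VF (I : ModelWithCorners ℝ EM H) (M : Type*) [TopologicalSpace M] [ChartedSpace H M] :
    Type _ :=
  Derivation ℝ C^∞⟮I, M; ℝ⟯ C^∞⟮I, M; ℝ⟯

variable (I : ModelWithCorners ℝ EM H) (M : Type*) [TopologicalSpace M] [ChartedSpace H M]

/-- A Riemannian metric on `M`, as a symmetric, `C^∞(M)`-bilinear, positive semidefinite and
nondegenerate pairing of smooth vector fields. -/
structure RMetric where
  g : VF I M → VF I M → C^∞⟮I, M; ℝ⟯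
  add_left : ∀ X Y Z, g (X + Y) Z = g X Z + g Y Z
  smul_left : ∀ (f : C^∞⟮I, M; ℝ⟯) (X Y : VF I M), g (f • X) Y = f * g X Y
  symm : ∀ X Y, g X Y = g Y X
  nonneg : ∀ (X : VF I M) (x : M), 0 ≤ g X X x
  nondeg : ∀ X, (∀ Y, g X Y = 0) → X = 0

/-- An affine connection on `M`, acting on smooth vector fields. -/
structure AffConnection where
  D : VF I M → VF I M → VF I M
  add_left : ∀ X Y Z, D (X + Y) Z = D X Z + D Y Z
  smul_left : ∀ (f : C^∞⟮I, M; ℝ⟯) (X Y : VF I M), D (f • X) Y = f • D X Y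
  add_right : ∀ X Y Z, D X (Y + Z) = D X Y + D X Z
  smul_right : ∀ (f : C^∞⟮I, M; ℝ⟯) (X Y : VF I M), D X (f • Y) = X f • Y + f • D X Y

variable {I M}

/-- Compatibility of an affine connection with the metric: `∇ g = 0`. -/
def AffConnection.Compatible (D : AffConnection I M) (gm : RMetric I M) : Prop :=
  ∀ X Y Z, X (gm.g Y Z) = gm.g (D.D X Y) Z + gm.g Y (D.D X Z)

/-- The torsion tensor of an affine connection. -/
def AffConnection.torsion (D : AffConnection I M) (X Y : VF I M) : VF I M :=
  D.D X Y - D.D Y X - ⁅X, Y⁆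

/-- The Lie derivative of the metric: `(L_Z g)(U,V)`. -/
def RMetric.lieD (gm : RMetric I M) (Z U V : VF I M) : C^∞⟮I, M; ℝ⟯ :=
  Z (gm.g U V) - gm.g ⁅Z, U⁆ V - gm.g U ⁅Z, V⁆

/-- The orthogonal complement of a distribution (submodule of vector fields). -/
def RMetric.perp (gm : RMetric I M) (E : Submodule C^∞⟮I, M; ℝ⟯ (VF I M)) :
    Submodule C^∞⟮I, M; ℝ⟯ (VF I M) where
  carrier := {ξ | ∀ X ∈ E, gm.g ξ X = 0}
  add_mem' := by
    intro a b ha hb X hX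
    have h := gm.add_left a b X
    simp only [Set.mem_setOf_eq] at ha hb
    rw [h, ha X hX, hb X hX, add_zero]
  zero_mem' := by
    intro X hX
    have h : gm.g 0 X = gm.g 0 X + gm.g 0 X := by
      simpa using (gm.add_left 0 0 X).symm
    exact (left_eq_add.mp h)
  smul_mem' := by
    intro f ξ hξ X hX
    rw [gm.smul_left, hξ X hX, mul_zero]

/-- The fiber of a distribution at a point, as a space of point derivations. -/
def fiberAt (E : Submodule C^∞⟮I, M; ℝ⟯ (VF I M)) (x : M) :
    Submodule ℝ (PointDerivation I x) :=
  (E.restrictScalars ℝ).map ((Derivation.evalAt x).restrictScalars ℝ)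

/-- The defining conditions of the canonical connection of `(M,g)` with respect to a
distribution `E`: metric-compatible, torsion vanishing on `E × E` and `E^⊥ × E^⊥`, and mixed
torsion prescribed by Lie derivatives of the metric. -/
def IsCanonicalConnection (gm : RMetric I M) (E : Submodule C^∞⟮I, M; ℝ⟯ (VF I M))
    (D : AffConnection I M) : Prop :=
  D.Compatible gm ∧
  (∀ X ∈ E, ∀ Y ∈ E, D.torsion X Y = 0) ∧
  (∀ ξ ∈ gm.perp E, ∀ η ∈ gm.perp E, D.torsion ξ η = 0) ∧
  (∀ ξ ∈ gm.perp E, ∀ X ∈ E, ∀ Y ∈ E,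
    gm.g (D.torsion ξ X) Y = (1 / 2 : ℝ) • gm.lieD ξ X Y) ∧
  (∀ ξ ∈ gm.perp E, ∀ X ∈ E, ∀ η ∈ gm.perp E,
    gm.g (D.torsion ξ X) η = -((1 / 2 : ℝ) • gm.lieD X ξ η))

section Aux

variable (gm : RMetric I M)

lemma RMetric.g_zero_left (X : VF I M) : gm.g 0 X = 0 := by
  have h := gm.add_left 0 0 X
  rw [add_zero] at h
  exact (left_eq_add.mp h)

lemma RMetric.g_neg_left (X Y : VF I M) : gm.g (-X) Y = -gm.g X Y := by
  have h : (-X : VF I M) = (-1 : C^∞⟮I, M; ℝ⟯) • X := (neg_one_smul _ X).symm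
  rw [h, gm.smul_left, neg_one_mul]

lemma RMetric.g_sub_left (X Y Z : VF I M) :
    gm.g (X - Y) Z = gm.g X Z - gm.g Y Z := by
  rw [sub_eq_add_neg, gm.add_left, gm.g_neg_left, sub_eq_add_neg]

lemma RMetric.g_add_right (X Y Z : VF I M) :
    gm.g X (Y + Z) = gm.g X Y + gm.g X Z := by
  rw [gm.symm, gm.add_left, gm.symm Y X, gm.symm Z X]

lemma RMetric.g_sub_right (X Y Z : VF I M) :
    gm.g X (Y - Z) = gm.g X Y - gm.g X Z := by
  rw [gm.symm, gm.g_sub_left, gm.symm Y X, gm.symm Z X]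

lemma smooth_fun_self_add (f : C^∞⟮I, M; ℝ⟯) (h : f + f = 0) : f = 0 := by
  ext x
  have hx : f x + f x = 0 := by simpa using congrArg (fun g => g x) h
  have : f x = 0 := by linarith
  simpa using this

lemma half_add_half (f : C^∞⟮I, M; ℝ⟯) :
    (1 / 2 : ℝ) • f + (1 / 2 : ℝ) • f = f := by
  rw [← add_smul]
  norm_num

end Aux

/-- If `E` is involutive, then `E` is totally geodesic with respect to the
canonical connection `∇` of `(M,g)` w.r.t. `E`: `g(∇_X Y, ξ) = 0` and, equivalently,
`g(Y, ∇_X ξ) = 0` for `X, Y ∈ Γ(E)` and `ξ ∈ Γ(E^⊥)`. -/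
theorem canonical_connection_totally_geodesic (gm : RMetric I M)
    (E : Submodule C^∞⟮I, M; ℝ⟯ (VF I M))
    (hinv : ∀ X ∈ E, ∀ Y ∈ E, ⁅X, Y⁆ ∈ E)
    (D : AffConnection I M) (hD : IsCanonicalConnection gm E D) :
    ∀ X ∈ E, ∀ Y ∈ E, ∀ ξ ∈ gm.perp E,
      gm.g (D.D X Y) ξ = 0 ∧ gm.g Y (D.D X ξ) = 0 := by
  obtain ⟨hc, hEE, -, hmix1, -⟩ := hD
  intro X hX Y hY ξ hξ
  -- basic orthogonality facts
  have hYξ : gm.g Y ξ = 0 := by rw [gm.symm]; exact hξ Y hY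
  have hXξ : gm.g X ξ = 0 := by rw [gm.symm]; exact hξ X hX
  have hbrk : gm.g ⁅X, Y⁆ ξ = 0 := by rw [gm.symm]; exact hξ _ (hinv X hX Y hY)
  -- compatibility on (X, Y, ξ) and (Y, X, ξ)
  have e1 : gm.g (D.D X Y) ξ + gm.g Y (D.D X ξ) = 0 := by
    have h := hc X Y ξ
    rw [hYξ, map_zero] at h
    exact h.symm
  have e2 : gm.g (D.D Y X) ξ + gm.g X (D.D Y ξ) = 0 := by
    have h := hc Y X ξ
    rw [hXξ, map_zero] at h
    exact h.symm
  -- torsion on E × E vanishes, so ∇_X Y = ∇_Y X + [X,Y]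
  have e3 : gm.g (D.D X Y) ξ = gm.g (D.D Y X) ξ := by
    have h := hEE X hX Y hY
    unfold AffConnection.torsion at h
    have h1 : D.D X Y - D.D Y X = ⁅X, Y⁆ := sub_eq_zero.mp h
    have h' : D.D X Y = D.D Y X + ⁅X, Y⁆ := sub_eq_iff_eq_add'.mp h1
    rw [h', gm.add_left, hbrk, add_zero]
  -- mixed torsion identities
  have hT1 := hmix1 ξ hξ X hX Y hY
  have hT2 := hmix1 ξ hξ Y hY X hX
  unfold AffConnection.torsion RMetric.lieD at hT1 hT2
  rw [gm.g_sub_left, gm.g_sub_left] at hT1 hT2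
  -- compatibility in the ξ direction
  have e5 : ξ (gm.g X Y) = gm.g (D.D ξ X) Y + gm.g X (D.D ξ Y) := hc ξ X Y
  -- abbreviations
  set p := gm.g (D.D ξ X) Y with hp
  set s := gm.g X (D.D ξ Y) with hs
  set q := gm.g Y (D.D X ξ) with hq
  set q' := gm.g X (D.D Y ξ) with hq'
  set r := gm.g ⁅ξ, X⁆ Y with hr
  set t := gm.g X ⁅ξ, Y⁆ with ht
  set c := (1 / 2 : ℝ) • (p + s - r - t) with hcdef
  have hc2 : c + c = p + s - r - t := half_add_half _
  -- rewrite hT1 : p - q - r = c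
  have hT1' : p - q - r = c := by
    rw [gm.symm (D.D X ξ) Y] at hT1
    rw [hT1, hcdef, e5]
  have hT2' : s - q' - t = c := by
    rw [gm.symm (D.D ξ Y) X, gm.symm (D.D Y ξ) X, gm.symm ⁅ξ, Y⁆ X] at hT2
    rw [hT2, hcdef]
    congr 1
    rw [gm.symm Y X, gm.symm Y ⁅ξ, X⁆, e5]
    ring
  -- from hT1' + hT2' : q + q' = 0
  have e4 : q + q' = 0 := by linear_combination -hc2 - hT1' - hT2'
  -- combine everything
  have hq0 : q = 0 := by
    apply smooth_fun_self_add
    linear_combination e4 + e1 - e2 - e3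
  exact ⟨by linear_combination e1 - hq0, hq0⟩
end
end

section
/- Let (M,g) be a Riemannian manifold with distribution E. The Vranceanu connection ∇*_X Y = (∇_{X^⊤}Y^⊤)^⊤ + (∇_{X^⊥}Y^⊥)^⊥ + [X^⊥,Y^⊤]^⊤ + [X^⊤,Y^⊥]^⊥ is an affine connection on M, and both E and E^⊥ are parallel subbundles with respect to ∇*. -/
open scoped Manifold Derivation

local notation "∞" => (⊤ : ℕ∞)

noncomputable section

variable {EM : Type*} [NormedAddCommGroup EM] [NormedSpace ℝ EM]
  {H : Type*} [TopologicalSpace H]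

variable (I : ModelWithCorners ℝ EM H) (M : Type*) [TopologicalSpace M] [ChartedSpace H M]

variable {I M}

set_option maxHeartbeats 1600000 in
/-- The Vranceanu connection
`∇*_X Y = (∇_{X^⊤}Y^⊤)^⊤ + (∇_{X^⊥}Y^⊥)^⊥ + [X^⊥,Y^⊤]^⊤ + [X^⊤,Y^⊥]^⊥` associated to the
Levi-Civita connection `∇` of `(M,g)` and a distribution `E` is an affine connection, and both
`E` and `E^⊥` are parallel with respect to it. Here `P` is the orthogonal projection onto
`E`. -/
theorem vranceanu_connection (gm : RMetric I M)
    (E : Submodule C^∞⟮I, M; ℝ⟯ (VF I M))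
    (L : AffConnection I M) (hL : L.Compatible gm) (hLtor : ∀ X Y, L.torsion X Y = 0)
    (P : VF I M → VF I M) (hP : ∀ Z : VF I M, P Z ∈ E ∧ Z - P Z ∈ gm.perp E) :
    ∃ D : AffConnection I M,
      (∀ X Y, D.D X Y =
        P (L.D (P X) (P Y))
          + (L.D (X - P X) (Y - P Y) - P (L.D (X - P X) (Y - P Y)))
          + P ⁅X - P X, P Y⁆
          + (⁅P X, Y - P Y⁆ - P ⁅P X, Y - P Y⁆)) ∧
      (∀ X : VF I M, ∀ Y ∈ E, D.D X Y ∈ E) ∧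
      (∀ X : VF I M, ∀ Y ∈ gm.perp E, D.D X Y ∈ gm.perp E) := by
  -- Bracket lemmas for `C^∞`-scalings of vector fields
  have hbrL : ∀ (f : C^∞⟮I, M; ℝ⟯) (X Y : VF I M),
      ⁅f • X, Y⁆ = f • ⁅X, Y⁆ - Y f • X := by
    intro f X Y
    ext h
    simp only [Derivation.commutator_apply, Derivation.smul_apply, Derivation.sub_apply,
      Derivation.leibniz, smul_eq_mul]
    ring
  have hbrR : ∀ (f : C^∞⟮I, M; ℝ⟯) (X Y : VF I M),
      ⁅X, f • Y⁆ = f • ⁅X, Y⁆ + X f • Y := by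
    intro f X Y
    ext h
    simp only [Derivation.commutator_apply, Derivation.smul_apply, Derivation.sub_apply,
      Derivation.add_apply, Derivation.leibniz, smul_eq_mul]
    ring
  have hbrAddL : ∀ X Y Z : VF I M, ⁅X + Y, Z⁆ = ⁅X, Z⁆ + ⁅Y, Z⁆ := by
    intro X Y Z
    ext h
    simp only [Derivation.commutator_apply, Derivation.add_apply, map_add]
    ring
  have hbrAddR : ∀ X Y Z : VF I M, ⁅X, Y + Z⁆ = ⁅X, Y⁆ + ⁅X, Z⁆ := by
    intro X Y Z
    ext h
    simp only [Derivation.commutator_apply, Derivation.add_apply, map_add]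
    ring
  have hbr0R : ∀ X : VF I M, ⁅X, (0 : VF I M)⁆ = 0 := by
    intro X
    ext h
    simp only [Derivation.commutator_apply, Derivation.zero_apply, map_zero, sub_self]
  -- `E ∩ E^⊥ = 0`
  have hE0 : ∀ Z : VF I M, Z ∈ E → Z ∈ gm.perp E → Z = 0 := by
    intro Z hZE hZP
    refine gm.nondeg Z fun Y => ?_
    have hdec : gm.g Z Y = gm.g Z (P Y) + gm.g Z (Y - P Y) := by
      rw [gm.symm Z Y, gm.symm Z (P Y), gm.symm Z (Y - P Y), ← gm.add_left]
      congr 1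
      abel
    rw [hdec, hZP (P Y) (hP Y).1, gm.symm, (hP Y).2 Z hZE, add_zero]
  -- Uniqueness of the orthogonal decomposition, hence properties of `P`
  have hPuniq : ∀ (Z a : VF I M), a ∈ E → Z - a ∈ gm.perp E → P Z = a := by
    intro Z a ha hZa
    have h1 : P Z - a ∈ E := sub_mem (hP Z).1 ha
    have h2 : P Z - a ∈ gm.perp E := by
      have h3 := sub_mem hZa (hP Z).2
      have e : Z - a - (Z - P Z) = P Z - a := by abel
      rwa [e] at h3
    exact sub_eq_zero.mp (hE0 _ h1 h2)
  have hPadd : ∀ X Y : VF I M, P (X + Y) = P X + P Y := by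
    intro X Y
    refine hPuniq _ _ (add_mem (hP X).1 (hP Y).1) ?_
    have h3 := add_mem (hP X).2 (hP Y).2
    have e : X - P X + (Y - P Y) = X + Y - (P X + P Y) := by abel
    rwa [e] at h3
  have hPsmul : ∀ (f : C^∞⟮I, M; ℝ⟯) (X : VF I M), P (f • X) = f • P X := by
    intro f X
    refine hPuniq _ _ (Submodule.smul_mem _ f (hP X).1) ?_
    have h3 := Submodule.smul_mem _ f (hP X).2
    rwa [smul_sub] at h3
  have hPsub : ∀ X Y : VF I M, P (X - Y) = P X - P Y := by
    intro X Y
    have h : P (X - Y) + P Y = P X := by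
      rw [← hPadd]; congr 1; abel
    exact eq_sub_of_add_eq h
  have hPE : ∀ Z ∈ E, P Z = Z := fun Z hZ =>
    hPuniq Z Z hZ (by simpa using (gm.perp E).zero_mem)
  have hPperp : ∀ Z ∈ gm.perp E, P Z = 0 := fun Z hZ =>
    hPuniq Z 0 (zero_mem E) (by simpa using hZ)
  have hP0 : P 0 = 0 := hPperp 0 (zero_mem _)
  have hPP : ∀ Z : VF I M, P (P Z) = P Z := fun Z => hPE _ (hP Z).1
  have hPQ : ∀ Z : VF I M, P (Z - P Z) = 0 := fun Z => hPperp _ (hP Z).2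
  have hL0 : ∀ X : VF I M, L.D X 0 = 0 := by
    intro X
    have h := L.add_right X 0 0
    rw [add_zero] at h
    exact (left_eq_add.mp h)
  refine ⟨⟨fun X Y =>
      P (L.D (P X) (P Y))
        + (L.D (X - P X) (Y - P Y) - P (L.D (X - P X) (Y - P Y)))
        + P ⁅X - P X, P Y⁆
        + (⁅P X, Y - P Y⁆ - P ⁅P X, Y - P Y⁆),
      ?_, ?_, ?_, ?_⟩,
    fun X Y => rfl, ?_, ?_⟩
  · intro X Y Z
    have e1 : X + Y - P (X + Y) = (X - P X) + (Y - P Y) := by rw [hPadd]; abel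
    rw [e1]
    simp only [hPadd, L.add_left, hbrAddL]
    abel
  · intro f X Y
    have e1 : f • X - P (f • X) = f • (X - P X) := by rw [hPsmul, smul_sub]
    rw [e1]
    simp only [L.smul_left, hbrL, hPsub, hPsmul, hPP, hPQ, smul_zero, sub_zero]
    module
  · intro X Y Z
    have e1 : Y + Z - P (Y + Z) = (Y - P Y) + (Z - P Z) := by rw [hPadd]; abel
    rw [e1]
    simp only [hPadd, L.add_right, hbrAddR]
    abel
  · intro f X Y
    have e1 : f • Y - P (f • Y) = f • (Y - P Y) := by rw [hPsmul, smul_sub]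
    rw [e1]
    simp only [L.smul_right, hbrR, hPadd, hPsub, hPsmul, hPP, hPQ, smul_zero,
      add_zero, zero_add, Derivation.sub_apply]
    module
  · intro X Y hY
    dsimp only
    rw [hPE Y hY]
    simp only [sub_self, hL0, hbr0R, hP0, sub_zero, add_zero, zero_sub, neg_zero]
    exact E.add_mem (hP _).1 (hP _).1
  · intro X Y hY
    dsimp only
    rw [hPperp Y hY]
    simp only [sub_zero, hL0, hP0, hbr0R, zero_add, add_zero, zero_sub, neg_zero, sub_self]
    exact (gm.perp E).add_mem (hP _).2 (hP _).2
end
end
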